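/- Suppose there exist simple 5-(18,6,4), 5-(18,7,54), 5-(18,8,128), 5-(18,10,729) and 5-(18,11,264) designs. Then there exists a simple 5-(36, 13, 2148120) design (note 2148120 = 3672 × 585). -/

import Mathlib

/-!
Split 36 points into two halves `X`, `Y` of 18 points each. For every
`s ∈ {2, 3, 5, 6, 7, 8, 10, 11}` take the blocks `a ∪ c`, where `a` runs through a family of
`s`-subsets of `X` and `c` through a family of `(13 - s)`-subsets of `Y`; each family is one of
the given 5-(18, s, λ) designs or consists of all `s`-subsets. If every `i`-subset (`i ≤ 5`) lies
in `λᵢ(s)` members of the family of `s`-sets, a 5-set meeting `X` in `i` points lies in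
`∑ₛ λᵢ(s) λ₅₋ᵢ(13 - s)` blocks. Double counting gives `λᵢ = λ C(v-i, t-i) / C(k-i, t-i)` for a
t-(v, k, λ) design, and for this choice of families the sum equals 2148120 for every `i`.
-/

/-- `SimpleDesignExists t v k lam` asserts the existence of a simple
`t-(v, k, lam)` design: a `v`-set `X` together with a set `B` of distinct
`k`-element subsets of `X` (blocks) such that every `t`-element subset of `X`
is contained in exactly `lam` blocks. -/
def SimpleDesignExists (t v k lam : ℕ) : Prop :=
  ∃ (X : Finset ℕ) (B : Finset (Finset ℕ)),
    X.card = v ∧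
    (∀ b ∈ B, b ⊆ X ∧ b.card = k) ∧
    (∀ T ⊆ X, T.card = t → (B.filter (fun b => T ⊆ b)).card = lam)

open Finset
open scoped FinsetFamily

variable {α β : Type*} [DecidableEq α] [DecidableEq β]

def IsDesign (t k lam : ℕ) (X : Finset α) (B : Finset (Finset α)) : Prop :=
  B ⊆ X.powersetCard k ∧ ∀ T ∈ X.powersetCard t, #{b ∈ B | T ⊆ b} = lam

def IsBalancedUpTo (t : ℕ) (X : Finset α) (B : Finset (Finset α)) (r : ℕ → ℕ) : Prop :=
  ∀ S ⊆ X, #S ≤ t → #{b ∈ B | S ⊆ b} = r #S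

-- Via complements `T ↦ X \ T`; in this form the count is also right (zero) when `#S > k`.
theorem Finset.card_filter_powersetCard_superset {S X : Finset α} {k : ℕ} (hS : S ⊆ X)
    (hk : k ≤ #X) : #{T ∈ X.powersetCard k | S ⊆ T} = (#X - #S).choose (#X - k) := by
  rw [← card_sdiff_of_subset hS, ← card_powersetCard]
  refine card_nbij' (X \ ·) (X \ ·) (fun T hT => ?_) (fun U hU => ?_) (fun T hT => ?_)
    (fun U hU => ?_)
  · simp only [mem_coe, mem_filter, mem_powersetCard] at hT
    obtain ⟨⟨hTX, hTk⟩, hST⟩ := hT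
    simp only [mem_coe, mem_powersetCard]
    exact ⟨sdiff_subset_sdiff subset_rfl hST, by rw [card_sdiff_of_subset hTX, hTk]⟩
  · simp only [mem_coe, mem_powersetCard] at hU
    obtain ⟨hUXS, hUk⟩ := hU
    have hUX : U ⊆ X := hUXS.trans sdiff_subset
    simp only [mem_coe, mem_filter, mem_powersetCard]
    refine ⟨⟨sdiff_subset, by rw [card_sdiff_of_subset hUX, hUk]; omega⟩, fun x hx => ?_⟩
    exact mem_sdiff.2 ⟨hS hx, fun hxU => (mem_sdiff.1 (hUXS hxU)).2 hx⟩
  · simp only [mem_coe, mem_filter, mem_powersetCard] at hT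
    exact sdiff_sdiff_eq_self hT.1.1
  · simp only [mem_coe, mem_powersetCard] at hU
    exact sdiff_sdiff_eq_self (hU.1.trans sdiff_subset)

theorem isBalancedUpTo_powersetCard (t : ℕ) {X : Finset α} {k : ℕ} (hk : k ≤ #X) :
    IsBalancedUpTo t X (X.powersetCard k) (fun i => (#X - i).choose (#X - k)) :=
  fun _ hS _ => card_filter_powersetCard_superset hS hk

namespace IsDesign

variable {t k lam : ℕ} {X : Finset α} {B : Finset (Finset α)}

theorem card_filter_superset_mul (hB : IsDesign t k lam X B) (htk : t ≤ k) (htX : t ≤ #X)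
    {S : Finset α} (hS : S ⊆ X) :
    #{b ∈ B | S ⊆ b} * (k - #S).choose (k - t) = lam * (#X - #S).choose (#X - t) := by
  have hcount := card_mul_eq_card_mul (· ⊆ ·)
    (s := {T ∈ X.powersetCard t | S ⊆ T}) (t := {b ∈ B | S ⊆ b}) (m := lam)
    (n := (k - #S).choose (k - t)) (fun T hT => ?_) (fun b hb => ?_)
  · rw [card_filter_powersetCard_superset hS htX] at hcount
    rw [hcount.symm.trans (mul_comm _ _)]
  · rw [mem_filter] at hT
    rw [bipartiteAbove, filter_filter, ← hB.2 T hT.1]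
    exact congrArg card (filter_congr fun b _ => ⟨fun h => h.2, fun h => ⟨hT.2.trans h, h⟩⟩)
  · rw [mem_filter] at hb
    obtain ⟨hbX, hbk⟩ := mem_powersetCard.1 (hB.1 hb.1)
    rw [bipartiteBelow, filter_filter, ← hbk,
      ← card_filter_powersetCard_superset hb.2 (hbk ▸ htk)]
    refine congrArg card (ext fun T => ?_)
    simp only [mem_filter, mem_powersetCard]
    exact ⟨fun ⟨⟨_, hTt⟩, hST, hTb⟩ => ⟨⟨hTb, hTt⟩, hST⟩,
      fun ⟨⟨hTb, hTt⟩, hST⟩ => ⟨⟨hTb.trans hbX, hTt⟩, hST, hTb⟩⟩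

theorem isBalancedUpTo (hB : IsDesign t k lam X B) (htk : t ≤ k) (htX : t ≤ #X) :
    IsBalancedUpTo t X B (fun i => lam * (#X - i).choose (#X - t) / (k - i).choose (k - t)) :=
  fun S hS hSt => Nat.eq_div_of_mul_eq_left (Nat.choose_pos (by omega)).ne'
    (hB.card_filter_superset_mul htk htX hS)

theorem map (hB : IsDesign t k lam X B) (e : α ↪ β) :
    IsDesign t k lam (X.map e) (B.map (mapEmbedding e).toEmbedding) := by
  refine ⟨?_, fun T hT => ?_⟩
  · rw [powersetCard_map]
    exact map_subset_map.2 hB.1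
  · rw [powersetCard_map, mem_map] at hT
    obtain ⟨T, hT, rfl⟩ := hT
    rw [filter_map, card_map, ← hB.2 T hT]
    exact congrArg card (filter_congr fun b _ => map_subset_map)

end IsDesign

theorem Finset.exists_perm_map_eq_of_card_eq {X Y : Finset α} (h : #X = #Y) :
    ∃ σ : Equiv.Perm α, X.map σ.toEmbedding = Y := by
  obtain ⟨σ, hσ⟩ := (Set.powersetCard.isPretransitive (α := α) (n := #Y)).exists_smul_eq
    (Set.powersetCard.ofCard h) (Set.powersetCard.ofCard rfl)
  refine ⟨σ, ?_⟩
  simpa [smul_finset_def, map_eq_image] using congrArg Subtype.val hσ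

theorem simpleDesignExists_iff {t v k lam : ℕ} :
    SimpleDesignExists t v k lam ↔
      ∃ X : Finset ℕ, #X = v ∧ ∃ B, IsDesign t k lam X B := by
  constructor
  · rintro ⟨X, B, hX, hB, hT⟩
    exact ⟨X, hX, B, fun b hb => mem_powersetCard.2 (hB b hb),
      fun T hT' => hT T (mem_powersetCard.1 hT').1 (mem_powersetCard.1 hT').2⟩
  · rintro ⟨X, hX, B, hB, hT⟩
    exact ⟨X, B, hX, fun b hb => mem_powersetCard.1 (hB hb),
      fun T hTX hTt => hT T (mem_powersetCard.2 ⟨hTX, hTt⟩)⟩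

theorem SimpleDesignExists.exists_isDesign {t v k lam : ℕ} (h : SimpleDesignExists t v k lam)
    {Y : Finset ℕ} (hY : #Y = v) : ∃ B, IsDesign t k lam Y B := by
  obtain ⟨X, hX, B, hB⟩ := simpleDesignExists_iff.1 h
  obtain ⟨σ, rfl⟩ := exists_perm_map_eq_of_card_eq (hX.trans hY.symm)
  exact ⟨_, hB.map σ.toEmbedding⟩

section Sups

variable {X Y : Finset α} {A C : Finset (Finset α)}

theorem Finset.union_inter_eq_left_of_disjoint {a c : Finset α} (hXY : Disjoint X Y)
    (ha : a ⊆ X) (hc : c ⊆ Y) : (a ∪ c) ∩ X = a := by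
  rw [union_inter_distrib_right, inter_eq_left.2 ha,
    disjoint_iff_inter_eq_empty.1 (hXY.symm.mono_left hc), union_empty]

theorem Finset.card_sups_of_disjoint (hXY : Disjoint X Y) (hA : ∀ a ∈ A, a ⊆ X)
    (hC : ∀ c ∈ C, c ⊆ Y) : #(A ⊻ C) = #A * #C := by
  refine (card_sups_iff A C).2 fun p hp q hq hpq => ?_
  simp only [Set.mem_prod, mem_coe] at hp hq
  have hpq' : p.1 ∪ p.2 = q.1 ∪ q.2 := hpq
  refine Prod.ext ?_ ?_
  · rw [← union_inter_eq_left_of_disjoint hXY (hA _ hp.1) (hC _ hp.2), hpq',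
      union_inter_eq_left_of_disjoint hXY (hA _ hq.1) (hC _ hq.2)]
  · rw [union_comm p.1, union_comm q.1] at hpq'
    rw [← union_inter_eq_left_of_disjoint hXY.symm (hC _ hp.2) (hA _ hp.1), hpq',
      union_inter_eq_left_of_disjoint hXY.symm (hC _ hq.2) (hA _ hq.1)]

theorem Finset.inter_mem_of_mem_sups (hXY : Disjoint X Y) (hA : ∀ a ∈ A, a ⊆ X)
    (hC : ∀ c ∈ C, c ⊆ Y) {b : Finset α} (hb : b ∈ A ⊻ C) : b ∩ X ∈ A := by
  obtain ⟨a, ha, c, hc, rfl⟩ := mem_sups.1 hb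
  rwa [sup_eq_union, union_inter_eq_left_of_disjoint hXY (hA a ha) (hC c hc)]

theorem Finset.filter_superset_sups (hXY : Disjoint X Y) (hA : ∀ a ∈ A, a ⊆ X)
    (hC : ∀ c ∈ C, c ⊆ Y) (T : Finset α) :
    {b ∈ A ⊻ C | T ⊆ b} = {a ∈ A | T ∩ X ⊆ a} ⊻ {c ∈ C | T \ X ⊆ c} := by
  ext b
  simp only [mem_filter, mem_sups, sup_eq_union]
  constructor
  · rintro ⟨⟨a, ha, c, hc, rfl⟩, hTb⟩
    refine ⟨a, ⟨ha, ?_⟩, c, ⟨hc, ?_⟩, rfl⟩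
    · exact Disjoint.left_le_of_le_sup_right (inter_subset_left.trans hTb)
        (hXY.mono inter_subset_right (hC c hc))
    · exact Disjoint.left_le_of_le_sup_left (sdiff_subset.trans hTb)
        (sdiff_disjoint.mono_right (hA a ha))
  · rintro ⟨a, ⟨ha, hTa⟩, c, ⟨hc, hTc⟩, rfl⟩
    refine ⟨⟨a, ha, c, hc, rfl⟩, fun x hx => ?_⟩
    by_cases hxX : x ∈ X
    · exact mem_union_left c (hTa (mem_inter.2 ⟨hx, hxX⟩))
    · exact mem_union_right a (hTc (mem_sdiff.2 ⟨hx, hxX⟩))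

theorem Finset.card_filter_superset_sups (hXY : Disjoint X Y) (hA : ∀ a ∈ A, a ⊆ X)
    (hC : ∀ c ∈ C, c ⊆ Y) (T : Finset α) :
    #{b ∈ A ⊻ C | T ⊆ b} = #{a ∈ A | T ∩ X ⊆ a} * #{c ∈ C | T \ X ⊆ c} := by
  rw [filter_superset_sups hXY hA hC, card_sups_of_disjoint hXY
    (fun a ha => hA a (mem_filter.1 ha).1) (fun c hc => hC c (mem_filter.1 hc).1)]

end Sups

section Gluing

variable {t k lam : ℕ} {X Y : Finset α} {I : Finset ℕ} {A C : ℕ → Finset (Finset α)}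

theorem pairwiseDisjoint_sups (hXY : Disjoint X Y) (hA : ∀ s ∈ I, A s ⊆ X.powersetCard s)
    (hC : ∀ s ∈ I, ∀ c ∈ C s, c ⊆ Y) :
    (I : Set ℕ).PairwiseDisjoint fun s => A s ⊻ C s := by
  have hAX : ∀ s ∈ I, ∀ a ∈ A s, a ⊆ X := fun s hs a ha =>
    (mem_powersetCard.1 (hA s hs ha)).1
  intro s hs s' hs' hss'
  refine disjoint_left.2 fun b hb hb' => hss' ?_
  have hcard {s b} (hs : s ∈ I) (hb : b ∈ A s ⊻ C s) : #(b ∩ X) = s :=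
    (mem_powersetCard.1 (hA s hs (inter_mem_of_mem_sups hXY (hAX s hs) (hC s hs) hb))).2
  rw [← hcard hs hb, hcard hs' hb']

theorem isDesign_biUnion_sups (hXY : Disjoint X Y) (hA : ∀ s ∈ I, A s ⊆ X.powersetCard s)
    (hC : ∀ s ∈ I, C s ⊆ Y.powersetCard (k - s)) (hIk : ∀ s ∈ I, s ≤ k) {rA rC : ℕ → ℕ → ℕ}
    (hrA : ∀ s ∈ I, IsBalancedUpTo t X (A s) (rA s))
    (hrC : ∀ s ∈ I, IsBalancedUpTo t Y (C s) (rC s))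
    (hsum : ∀ i ≤ t, ∑ s ∈ I, rA s i * rC s (t - i) = lam) :
    IsDesign t k lam (X ∪ Y) (I.biUnion fun s => A s ⊻ C s) := by
  have hAX : ∀ s ∈ I, ∀ a ∈ A s, a ⊆ X := fun s hs a ha =>
    (mem_powersetCard.1 (hA s hs ha)).1
  have hCY : ∀ s ∈ I, ∀ c ∈ C s, c ⊆ Y := fun s hs c hc =>
    (mem_powersetCard.1 (hC s hs hc)).1
  refine ⟨fun b hb => ?_, fun T hT => ?_⟩
  · obtain ⟨s, hs, hb⟩ := mem_biUnion.1 hb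
    obtain ⟨a, ha, c, hc, rfl⟩ := mem_sups.1 hb
    obtain ⟨haX, has⟩ := mem_powersetCard.1 (hA s hs ha)
    obtain ⟨hcY, hck⟩ := mem_powersetCard.1 (hC s hs hc)
    refine mem_powersetCard.2 ⟨union_subset_union haX hcY, ?_⟩
    rw [sup_eq_union, card_union_of_disjoint (hXY.mono haX hcY), has, hck,
      Nat.add_sub_cancel' (hIk s hs)]
  · obtain ⟨hTXY, hTt⟩ := mem_powersetCard.1 hT
    have hTX : T \ X ⊆ Y := fun x hx =>
      (mem_union.1 (hTXY (mem_sdiff.1 hx).1)).resolve_left (mem_sdiff.1 hx).2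
    have hsplit : #(T \ X) = t - #(T ∩ X) := by
      rw [← hTt, ← card_sdiff_add_card_inter T X, Nat.add_sub_cancel]
    have hTXt : #(T ∩ X) ≤ t := hTt ▸ card_le_card inter_subset_left
    rw [filter_biUnion,
      card_biUnion ((pairwiseDisjoint_sups hXY hA hCY).mono fun s => filter_subset _ _),
      ← hsum _ hTXt]
    refine sum_congr rfl fun s hs => ?_
    rw [card_filter_superset_sups hXY (hAX s hs) (hCY s hs), hrA s hs _ inter_subset_right hTXt,
      hrC s hs _ hTX (hsplit ▸ Nat.sub_le t _), hsplit]

end Gluing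

def blockSplits : Finset ℕ := {2, 3, 5, 6, 7, 8, 10, 11}

-- The number of blocks through an `i`-set in the family of `s`-sets placed on an 18-point half:
-- the given 5-(18, s, λ) design (see `IsDesign.isBalancedUpTo`) or all `s`-subsets.
def halfCount : ℕ → ℕ → ℕ
  | 6 => fun i => 4 * (18 - i).choose (18 - 5) / (6 - i).choose (6 - 5)
  | 7 => fun i => 54 * (18 - i).choose (18 - 5) / (7 - i).choose (7 - 5)
  | 8 => fun i => 128 * (18 - i).choose (18 - 5) / (8 - i).choose (8 - 5)
  | 10 => fun i => 729 * (18 - i).choose (18 - 5) / (10 - i).choose (10 - 5)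
  | 11 => fun i => 264 * (18 - i).choose (18 - 5) / (11 - i).choose (11 - 5)
  | s => fun i => (18 - i).choose (18 - s)

theorem exists_balanced_families_of_card_eq_18 (h1 : SimpleDesignExists 5 18 6 4)
    (h2 : SimpleDesignExists 5 18 7 54) (h3 : SimpleDesignExists 5 18 8 128)
    (h4 : SimpleDesignExists 5 18 10 729) (h5 : SimpleDesignExists 5 18 11 264)
    {X : Finset ℕ} (hX : #X = 18) : ∃ F : ℕ → Finset (Finset ℕ),
      ∀ s ∈ blockSplits, F s ⊆ X.powersetCard s ∧ IsBalancedUpTo 5 X (F s) (halfCount s) := by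
  have complete (s : ℕ) (hs : s ≤ 18) : IsBalancedUpTo 5 X (X.powersetCard s)
      (fun i => (18 - i).choose (18 - s)) := by
    have := isBalancedUpTo_powersetCard 5 (hX ▸ hs : s ≤ #X)
    rwa [hX] at this
  have design {k lam : ℕ} {D : Finset (Finset ℕ)} (hD : IsDesign 5 k lam X D) (hk : 5 ≤ k) :
      IsBalancedUpTo 5 X D
        (fun i => lam * (18 - i).choose (18 - 5) / (k - i).choose (k - 5)) := by
    have := hD.isBalancedUpTo hk (by omega)
    rwa [hX] at this
  obtain ⟨D6, hD6⟩ := h1.exists_isDesign hX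
  obtain ⟨D7, hD7⟩ := h2.exists_isDesign hX
  obtain ⟨D8, hD8⟩ := h3.exists_isDesign hX
  obtain ⟨D10, hD10⟩ := h4.exists_isDesign hX
  obtain ⟨D11, hD11⟩ := h5.exists_isDesign hX
  refine ⟨fun s => if s = 6 then D6 else if s = 7 then D7 else if s = 8 then D8
    else if s = 10 then D10 else if s = 11 then D11 else X.powersetCard s, fun s hs => ?_⟩
  simp only [blockSplits, mem_insert, mem_singleton] at hs
  rcases hs with rfl | rfl | rfl | rfl | rfl | rfl | rfl | rfl
  · exact ⟨subset_rfl, complete 2 (by norm_num)⟩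
  · exact ⟨subset_rfl, complete 3 (by norm_num)⟩
  · exact ⟨subset_rfl, complete 5 (by norm_num)⟩
  · exact ⟨hD6.1, design hD6 (by norm_num)⟩
  · exact ⟨hD7.1, design hD7 (by norm_num)⟩
  · exact ⟨hD8.1, design hD8 (by norm_num)⟩
  · exact ⟨hD10.1, design hD10 (by norm_num)⟩
  · exact ⟨hD11.1, design hD11 (by norm_num)⟩

theorem designExists_5_36_13
    (h1 : SimpleDesignExists 5 18 6 4)
    (h2 : SimpleDesignExists 5 18 7 54)
    (h3 : SimpleDesignExists 5 18 8 128)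
    (h4 : SimpleDesignExists 5 18 10 729)
    (h5 : SimpleDesignExists 5 18 11 264)
    : SimpleDesignExists 5 36 13 2148120 := by
  have hdisj : Disjoint (Ico 0 18) (Ico 18 36) := Ico_disjoint_Ico_consecutive 0 18 36
  obtain ⟨F, hF⟩ :=
    exists_balanced_families_of_card_eq_18 h1 h2 h3 h4 h5 (X := Ico 0 18) (by simp)
  obtain ⟨G, hG⟩ :=
    exists_balanced_families_of_card_eq_18 h1 h2 h3 h4 h5 (X := Ico 18 36) (by simp)
  have hsplits : ∀ s ∈ blockSplits, s ≤ 13 ∧ 13 - s ∈ blockSplits := by decide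
  have hcount : ∀ i ≤ 5,
      ∑ s ∈ blockSplits, halfCount s i * halfCount (13 - s) (5 - i) = 2148120 := by decide
  refine simpleDesignExists_iff.2 ⟨_, by rw [card_union_of_disjoint hdisj]; simp, _,
    isDesign_biUnion_sups hdisj (C := fun s => G (13 - s)) (fun s hs => (hF s hs).1)
      (fun s hs => (hG _ (hsplits s hs).2).1) (fun s hs => (hsplits s hs).1)
      (fun s hs => (hF s hs).2) (fun s hs => (hG _ (hsplits s hs).2).2) hcount⟩
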